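/- Given a root system (Y, X, ⟨,⟩, α̌_i, α_i (i ∈ I)), the Weyl group W, i.e. the subgroup of Aut(X) generated by the reflections s_i : x ↦ x − ⟨α̌_i, x⟩α_i (i ∈ I), is finite. -/

import Mathlib

/-!
Let `C = (⟨α̌_i, α_j⟩)` be the Cartan matrix and `A = diag(c) C` its positive definite
symmetrization; `A` is invertible, hence so is `C`. The map `t x = C⁻¹ (⟨α̌_i, x⟩)_i` sends `X`
additively to `ℝ^I`, the simple root `α_j` to the basis vector `e_j`, and intertwines `s_k` with
`u ↦ u - (C u)_k e_k`, a reflection that preserves the form `uᵀ A u`. Every `w ∈ W` moves `x` by an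
integral combination of simple roots, so `t (w x)` is a point of the shifted lattice `t x + ℤ^I` on
the ellipsoid `uᵀ A u = (t x)ᵀ A (t x)`, of which there are finitely many. Thus all `W`-orbits are
finite, and as `X` is finitely generated, `W` embeds into a finite product of orbits.
-/

open Matrix

theorem AddAut.comp_eq_of_mem_closure {X β : Type*} [Add X] {S : Set (AddAut X)} {f : X → β}
    (hS : ∀ s ∈ S, f ∘ s = f) {w : AddAut X} (hw : w ∈ AddSubgroup.closure S) : f ∘ w = f := by
  induction hw using AddSubgroup.closure_induction with
  | mem s hs => exact hS s hs
  | zero => rfl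
  | add a b _ _ ha hb => change (f ∘ a) ∘ b = f; rw [ha, hb]
  | neg a _ ha =>
    funext x
    simpa using (congrFun ha ((-a) x)).symm

theorem AddAut.sub_mem_of_mem_closure {X : Type*} [AddCommGroup X] {S : Set (AddAut X)}
    {N : AddSubgroup X} (hS : ∀ s ∈ S, ∀ x, s x - x ∈ N) {w : AddAut X}
    (hw : w ∈ AddSubgroup.closure S) (x : X) : w x - x ∈ N := by
  have := AddAut.comp_eq_of_mem_closure (f := ((↑) : X → X ⧸ N))
    (fun s hs => funext fun x => (QuotientAddGroup.eq_iff_sub_mem).2 (hS s hs x)) hw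
  exact QuotientAddGroup.eq_iff_sub_mem.1 (congrFun this x)

theorem AddAut.finite_of_forall_finite_image_apply {X : Type*} [AddGroup X] [AddGroup.FG X]
    {S : Set (AddAut X)} (hS : ∀ x, ((fun w : AddAut X => w x) '' S).Finite) : S.Finite := by
  obtain ⟨F, hF⟩ := (AddGroup.FG.out : (⊤ : AddSubgroup X).FG)
  have hinj : Set.InjOn (fun (w : AddAut X) (x : F) => w x) S := fun a _ b _ hab =>
    AddEquiv.toAddMonoidHom_injective <|
      AddMonoidHom.eq_of_eqOn_dense hF fun x hx => congrFun hab ⟨x, hx⟩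
  refine Set.Finite.of_finite_image ((Set.Finite.pi fun x : F => hS x).subset ?_) hinj
  rintro _ ⟨w, hw, rfl⟩ x -
  exact ⟨w, hw, rfl⟩

namespace Matrix

variable {I : Type*} [Fintype I]

theorem dotProduct_mulVec_sub_smul_single {R : Type*} [CommRing R] [DecidableEq I]
    {A : Matrix I I R} (hA : A.IsSymm) (u : I → R) {k : I} {a : R}
    (ha : a * A k k = 2 * (A *ᵥ u) k) :
    (u - a • Pi.single k 1) ⬝ᵥ A *ᵥ (u - a • Pi.single k 1) = u ⬝ᵥ A *ᵥ u := by
  have hsymm : u ⬝ᵥ A.col k = (A *ᵥ u) k := by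
    simp only [mulVec, dotProduct, col_apply, ← hA.apply k, mul_comm]
  simp only [mulVec_sub, mulVec_smul, sub_dotProduct, dotProduct_sub, smul_dotProduct,
    dotProduct_smul, single_dotProduct, mulVec_single_one, hsymm, col_apply, one_mul, smul_eq_mul]
  linear_combination a * ha

theorem exists_pos_mul_norm_sq_le_dotProduct_mulVec {A : Matrix I I ℝ}
    (hA : ∀ v ≠ 0, 0 < v ⬝ᵥ A *ᵥ v) : ∃ ε > 0, ∀ v, ε * ‖v‖ ^ 2 ≤ v ⬝ᵥ A *ᵥ v := by
  have hsphere (v : I → ℝ) (hv : v ≠ 0) : ‖v‖⁻¹ • v ∈ Metric.sphere 0 1 := by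
    simp [norm_smul, hv]
  rcases (Metric.sphere (0 : I → ℝ) 1).eq_empty_or_nonempty with hempty | hne
  · refine ⟨1, one_pos, fun v => ?_⟩
    obtain rfl : v = 0 := by_contra fun hv => by simpa [hempty] using hsphere v hv
    simp
  obtain ⟨v₀, hv₀, hmin⟩ := (isCompact_sphere 0 1).exists_isMinOn hne
    (Continuous.continuousOn (by fun_prop) : ContinuousOn (fun v : I → ℝ => v ⬝ᵥ A *ᵥ v) _)
  refine ⟨_, hA v₀ (by rintro rfl; simp at hv₀), fun v => ?_⟩
  rcases eq_or_ne v 0 with rfl | hv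
  · simp
  have hle := isMinOn_iff.mp hmin _ (hsphere v hv)
  rw [mulVec_smul, smul_dotProduct, dotProduct_smul, smul_eq_mul, smul_eq_mul] at hle
  have hnorm : ‖v‖ ≠ 0 := norm_ne_zero_iff.mpr hv
  calc v₀ ⬝ᵥ A *ᵥ v₀ * ‖v‖ ^ 2
      ≤ ‖v‖⁻¹ * (‖v‖⁻¹ * (v ⬝ᵥ A *ᵥ v)) * ‖v‖ ^ 2 := by gcongr
    _ = v ⬝ᵥ A *ᵥ v := by field_simp

theorem finite_setOf_dotProduct_mulVec_add_intCast_le {A : Matrix I I ℝ}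
    (hA : ∀ v ≠ 0, 0 < v ⬝ᵥ A *ᵥ v) (u : I → ℝ) (R : ℝ) :
    {m : I → ℤ | (u + fun i => (m i : ℝ)) ⬝ᵥ A *ᵥ (u + fun i => (m i : ℝ)) ≤ R}.Finite := by
  obtain ⟨ε, hε, hcoer⟩ := exists_pos_mul_norm_sq_le_dotProduct_mulVec hA
  refine (isCompact_closedBall (0 : I → ℤ) (√(R / ε) + ‖u‖)).finite_of_discrete.subset ?_
  intro m hm
  have hshift : ‖u + fun i => (m i : ℝ)‖ ≤ √(R / ε) :=
    Real.le_sqrt_of_sq_le <| (le_div_iff₀' hε).2 <| (hcoer _).trans hm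
  have hm_real : ‖fun i => (m i : ℝ)‖ ≤ √(R / ε) + ‖u‖ := by
    calc ‖fun i => (m i : ℝ)‖ = ‖(u + fun i => (m i : ℝ)) - u‖ := by rw [add_sub_cancel_left]
      _ ≤ _ := (norm_sub_le _ _).trans (by gcongr)
  rw [mem_closedBall_zero_iff, pi_norm_le_iff_of_nonneg (by positivity)]
  exact fun i => (Int.norm_cast_real (m i)).symm.le.trans ((norm_le_pi_norm _ i).trans hm_real)

theorem isUnit_of_forall_dotProduct_mulVec_pos [DecidableEq I] {A : Matrix I I ℝ}
    (hA : ∀ v ≠ 0, 0 < v ⬝ᵥ A *ᵥ v) : IsUnit A := by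
  refine mulVec_injective_iff_isUnit.1 fun v w hvw => ?_
  by_contra hne
  have hpos := hA (v - w) (sub_ne_zero.2 hne)
  rw [mulVec_sub, hvw, sub_self, dotProduct_zero] at hpos
  exact hpos.false

end Matrix

section RootDatum

variable {X Y I : Type*} [AddCommGroup X] [AddCommGroup Y] [Fintype I]
  (p : Y →ₗ[ℤ] X →ₗ[ℤ] ℤ) (coroot : I → Y) (root : I → X)

def cartanMatrix : Matrix I I ℝ := of fun i j => (p (coroot i) (root j) : ℝ)

variable [DecidableEq I]

noncomputable def rootCoords : X →+ (I → ℝ) where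
  toFun x := (cartanMatrix p coroot root)⁻¹ *ᵥ fun i => (p (coroot i) x : ℝ)
  map_zero' := by simp only [map_zero, Int.cast_zero]; exact mulVec_zero _
  map_add' x y := by simp only [map_add, Int.cast_add, ← mulVec_add]; rfl

variable {p coroot root}

theorem cartanMatrix_mulVec_rootCoords (hC : IsUnit (cartanMatrix p coroot root))
    (x : X) :
    cartanMatrix p coroot root *ᵥ rootCoords p coroot root x = fun i => (p (coroot i) x : ℝ) := by
  rw [rootCoords, AddMonoidHom.coe_mk, ZeroHom.coe_mk, mulVec_mulVec,
    mul_nonsing_inv _ ((isUnit_iff_isUnit_det _).1 hC), one_mulVec]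

theorem rootCoords_root (hC : IsUnit (cartanMatrix p coroot root))
    (j : I) : rootCoords p coroot root (root j) = Pi.single j 1 := by
  have : (fun i => (p (coroot i) (root j) : ℝ)) = cartanMatrix p coroot root *ᵥ Pi.single j 1 := by
    ext i; simp [cartanMatrix]
  rw [rootCoords, AddMonoidHom.coe_mk, ZeroHom.coe_mk, this, mulVec_mulVec,
    nonsing_inv_mul _ ((isUnit_iff_isUnit_det _).1 hC), one_mulVec]

theorem rootCoords_add_sum_zsmul_root (hC : IsUnit (cartanMatrix p coroot root))
    (x : X) (m : I → ℤ) :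
    rootCoords p coroot root (x + ∑ j, m j • root j) =
      rootCoords p coroot root x + fun j => (m j : ℝ) := by
  simp only [map_add, map_sum, map_zsmul, rootCoords_root hC]
  ext j
  simp [Pi.single_apply]

theorem rootCoords_sub_smul_root (hC : IsUnit (cartanMatrix p coroot root))
    (x : X) (k : I) :
    rootCoords p coroot root (x - p (coroot k) x • root k) =
      rootCoords p coroot root x -
        (cartanMatrix p coroot root *ᵥ rootCoords p coroot root x) k • Pi.single k 1 := by
  rw [map_sub, map_zsmul, rootCoords_root hC, cartanMatrix_mulVec_rootCoords hC,
    Int.cast_smul_eq_zsmul]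

theorem dotProduct_mulVec_rootCoords_sub_smul_root (hC : IsUnit (cartanMatrix p coroot root))
    {c : I → ℝ}
    (hA : (diagonal c * cartanMatrix p coroot root).IsSymm)
    (h2 : ∀ i, p (coroot i) (root i) = 2) (x : X) (k : I) :
    rootCoords p coroot root (x - p (coroot k) x • root k) ⬝ᵥ
        (diagonal c * cartanMatrix p coroot root) *ᵥ
          rootCoords p coroot root (x - p (coroot k) x • root k) =
      rootCoords p coroot root x ⬝ᵥ
        (diagonal c * cartanMatrix p coroot root) *ᵥ rootCoords p coroot root x := by
  rw [rootCoords_sub_smul_root hC]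
  refine dotProduct_mulVec_sub_smul_single hA _ ?_
  simp only [← mulVec_mulVec, mulVec_diagonal, diagonal_mul, cartanMatrix, of_apply, h2]
  push_cast
  ring

theorem finite_orbit_closure_reflections {c : I → ℝ}
    (hA_symm : (diagonal c * cartanMatrix p coroot root).IsSymm)
    (hA_pos : ∀ v ≠ 0, 0 < v ⬝ᵥ (diagonal c * cartanMatrix p coroot root) *ᵥ v)
    (h2 : ∀ i, p (coroot i) (root i) = 2)
    {s : I → AddAut X} (hs : ∀ i x, s i x = x - p (coroot i) x • root i) (x : X) :
    ((fun w : AddAut X => w x) '' AddSubgroup.closure (Set.range s)).Finite := by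
  have hC := isUnit_of_mul_isUnit_right (isUnit_of_forall_dotProduct_mulVec_pos hA_pos)
  set t := rootCoords p coroot root
  set A := diagonal c * cartanMatrix p coroot root
  have hQ {w} (hw : w ∈ AddSubgroup.closure (Set.range s)) :
      (fun y => t y ⬝ᵥ A *ᵥ t y) ∘ w = fun y => t y ⬝ᵥ A *ᵥ t y := by
    refine AddAut.comp_eq_of_mem_closure ?_ hw
    rintro _ ⟨k, rfl⟩
    funext y
    simp only [Function.comp_apply, hs]
    exact dotProduct_mulVec_rootCoords_sub_smul_root hC hA_symm h2 y k
  have hspan {w} (hw : w ∈ AddSubgroup.closure (Set.range s)) (y : X) :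
      w y - y ∈ Submodule.span ℤ (Set.range root) := by
    refine AddAut.sub_mem_of_mem_closure (N := (Submodule.span ℤ (Set.range root)).toAddSubgroup)
      ?_ hw y
    rintro _ ⟨k, rfl⟩ y
    rw [hs, sub_sub_cancel_left]
    exact neg_mem (Submodule.smul_mem _ _ (Submodule.subset_span ⟨k, rfl⟩))
  refine ((finite_setOf_dotProduct_mulVec_add_intCast_le hA_pos (t x) (t x ⬝ᵥ A *ᵥ t x)).image
    fun m => x + ∑ j, m j • root j).subset ?_
  rintro _ ⟨w, hw, rfl⟩
  obtain ⟨m, hm⟩ := (Submodule.mem_span_range_iff_exists_fun ℤ).1 (hspan hw x)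
  have hwx : w x = x + ∑ j, m j • root j := by rw [hm, add_sub_cancel]
  refine ⟨m, ?_, hwx.symm⟩
  rw [Set.mem_ofPred_eq, ← rootCoords_add_sum_zsmul_root hC, ← hwx]
  exact (congrFun (hQ hw) x).le

end RootDatum

theorem stmt_12 {Y X : Type*} [AddCommGroup Y] [AddCommGroup X]
    [Module.Finite ℤ X]
    (p : Y →ₗ[ℤ] X →ₗ[ℤ] ℤ)
    {I : Type*} [Fintype I]
    (coroot : I → Y) (root : I → X)
    (h2 : ∀ i, p (coroot i) (root i) = 2)
    (hpos : ∃ c : I → ℤ, (∀ i, 0 < c i) ∧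
      (∀ i j, ((c i * p (coroot i) (root j) : ℤ) : ℝ) =
        ((c j * p (coroot j) (root i) : ℤ) : ℝ)) ∧
      (∀ x : I → ℝ, x ≠ 0 →
        0 < ∑ i, ∑ j, x i * ((c i * p (coroot i) (root j) : ℤ) : ℝ) * x j))
    (s : I → AddAut X) (hs : ∀ i x, s i x = x - p (coroot i) x • root i) :
    (AddSubgroup.closure (Set.range s) : Set (AddAut X)).Finite := by
  classical
  obtain ⟨c, -, hsymm, hpd⟩ := hpos
  have hA_symm : (diagonal (fun i => (c i : ℝ)) * cartanMatrix p coroot root).IsSymm :=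
    IsSymm.ext fun i j => by simpa [diagonal_mul, cartanMatrix] using (hsymm i j).symm
  have hA_pos (v : I → ℝ) (hv : v ≠ 0) :
      0 < v ⬝ᵥ (diagonal (fun i => (c i : ℝ)) * cartanMatrix p coroot root) *ᵥ v := by
    convert hpd v hv using 1
    simp [dotProduct, mulVec, diagonal_mul, cartanMatrix, Finset.mul_sum, mul_assoc]
  have := Module.Finite.iff_addGroup_fg.mp ‹Module.Finite ℤ X›
  exact AddAut.finite_of_forall_finite_image_apply
    (finite_orbit_closure_reflections hA_symm hA_pos h2 hs)
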